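/- (Elimination of Simultaneous Feedback.) Let G be an n×n real matrix with nonnegative entries whose rows each sum to 1 (a row-normalized adjacency matrix), let β, γ, δ, λ ∈ ℝ with |β| < 1, and let X, U, ε, Y ∈ ℝⁿ satisfy the structural equation Y = β G Y + γ G X + δ X + λ U + ε. Then I − β G is invertible and the differenced outcome satisfies the no-feedback form (I − G) Y = (I − β G)⁻¹ [ (δ I + γ G)(I − G) X + λ (I − G) U + (I − G) ε ], in which the simultaneous feedback term G Y no longer appears on the right-hand side. -/
import Mathlib


/-- Elimination of Simultaneous Feedback (Proposition 1):
under the SEM `Y = β G Y + γ G X + δ X + λ U + ε` with `G` row-normalized and `|β| < 1`,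
`I - β G` is invertible and
`(I - G) Y = (I - β G)⁻¹ [(δ I + γ G)(I - G) X + λ (I - G) U + (I - G) ε]`. -/
theorem elimination_of_simultaneous_feedback
    {n : ℕ} (G : Matrix (Fin n) (Fin n) ℝ)
    (hnonneg : ∀ i j, 0 ≤ G i j)
    (hrow : ∀ i, ∑ j, G i j = 1)
    (β γ δ lam : ℝ) (hβ : |β| < 1)
    (X U ε Y : Fin n → ℝ)
    (hSEM : Y = β • G.mulVec Y + γ • G.mulVec X + δ • X + lam • U + ε) :
    IsUnit ((1 : Matrix (Fin n) (Fin n) ℝ) - β • G) ∧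
      ((1 : Matrix (Fin n) (Fin n) ℝ) - G).mulVec Y
        = ((1 : Matrix (Fin n) (Fin n) ℝ) - β • G)⁻¹.mulVec
            ((δ • (1 : Matrix (Fin n) (Fin n) ℝ) + γ • G).mulVec
                (((1 : Matrix (Fin n) (Fin n) ℝ) - G).mulVec X)
              + lam • ((1 : Matrix (Fin n) (Fin n) ℝ) - G).mulVec U
              + ((1 : Matrix (Fin n) (Fin n) ℝ) - G).mulVec ε) := by
  set A : Matrix (Fin n) (Fin n) ℝ := 1 - β • G with hA
  set B : Matrix (Fin n) (Fin n) ℝ := 1 - G with hB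
  -- diagonal entries of G are at most 1
  have hGle : ∀ i, G i i ≤ 1 := fun i => by
    rw [← hrow i]
    exact Finset.single_le_sum (fun j _ => hnonneg i j) (Finset.mem_univ i)
  -- strict diagonal dominance of A
  have hdet : A.det ≠ 0 := by
    apply det_ne_zero_of_sum_row_lt_diag
    intro k
    have h1 : ∑ j ∈ Finset.univ.erase k, ‖A k j‖ = |β| * (1 - G k k) := by
      have : ∀ j ∈ Finset.univ.erase k, ‖A k j‖ = |β| * G k j := by
        intro j hj
        have hjk : j ≠ k := Finset.ne_of_mem_erase hj
        simp [hA, Matrix.sub_apply, Matrix.one_apply_ne hjk.symm, Matrix.smul_apply,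
          abs_mul, abs_of_nonneg (hnonneg k j)]
      rw [Finset.sum_congr rfl this, ← Finset.mul_sum]
      congr 1
      have := Finset.sum_erase_eq_sub (f := fun j => G k j) (Finset.mem_univ k)
      rw [this, hrow k]
    have h2 : ‖A k k‖ ≥ 1 - |β| * G k k := by
      have : A k k = 1 - β * G k k := by
        simp [hA, Matrix.sub_apply, Matrix.one_apply_eq k, Matrix.smul_apply]
      rw [this, Real.norm_eq_abs]
      calc 1 - |β| * G k k = 1 - |β * G k k| := by
            rw [abs_mul, abs_of_nonneg (hnonneg k k)]
        _ ≤ |1 - β * G k k| := by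
            have := abs_sub_abs_le_abs_sub (1 : ℝ) (β * G k k)
            simpa using this
    rw [h1]
    have : |β| * (1 - G k k) < 1 - |β| * G k k := by nlinarith [abs_nonneg β, hnonneg k k, hGle k]
    linarith [h2]
  have hunit : IsUnit A := by
    rw [Matrix.isUnit_iff_isUnit_det]
    exact isUnit_iff_ne_zero.mpr hdet
  refine ⟨hunit, ?_⟩
  -- A and B commute
  have hcomm : A * B = B * A := by
    simp only [hA, hB, Matrix.mul_sub, Matrix.sub_mul, Matrix.mul_one, Matrix.one_mul,
      Matrix.mul_smul, Matrix.smul_mul, smul_sub]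
    abel
  -- A.mulVec Y = γ • G.mulVec X + δ • X + lam • U + ε
  have hAY : A.mulVec Y = γ • G.mulVec X + δ • X + lam • U + ε := by
    rw [hA, Matrix.sub_mulVec, Matrix.one_mulVec, Matrix.smul_mulVec]
    nth_rewrite 1 [hSEM]
    abel
  have key : A.mulVec (B.mulVec Y)
      = (δ • (1 : Matrix (Fin n) (Fin n) ℝ) + γ • G).mulVec (B.mulVec X)
        + lam • B.mulVec U + B.mulVec ε := by
    rw [Matrix.mulVec_mulVec, hcomm, ← Matrix.mulVec_mulVec, hAY]
    have hGB : G * B = B * G := by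
      simp only [hB, Matrix.mul_sub, Matrix.sub_mul, Matrix.mul_one, Matrix.one_mul]
    rw [Matrix.add_mulVec, Matrix.smul_mulVec, Matrix.smul_mulVec,
      Matrix.one_mulVec, Matrix.mulVec_mulVec, hGB, ← Matrix.mulVec_mulVec]
    simp only [Matrix.mulVec_add, Matrix.mulVec_smul]
    abel
  have h2 : A⁻¹.mulVec (A.mulVec (B.mulVec Y)) = B.mulVec Y := by
    rw [Matrix.mulVec_mulVec, Matrix.mulVec_mulVec,
      Matrix.nonsing_inv_mul A (isUnit_iff_ne_zero.mpr hdet), Matrix.one_mul]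
  rw [← h2, key]
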